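/- arXiv:2410.14440 — 6 statements merged into one kernel-verified Lean document; each statement's English description precedes it below -/
import Mathlib

section
/- If a Set-functor F preserves 1/4-mono pullbacks, then F admits a normal lax extension. -/
open CategoryTheory

universe u

/-- A relation from `X` to `Y`. -/
abbrev Rel' (X Y : Type u) : Type u := X → Y → Prop

/-- Composite `s ⋅ r` of `r : X ⇸ Y` and `s : Y ⇸ Z`. -/
def relComp {X Y Z : Type u} (s : Rel' Y Z) (r : Rel' X Y) : Rel' X Z :=
  fun x z => ∃ y, r x y ∧ s y z

/-- Converse relation `r°`. -/
def relConv {X Y : Type u} (r : Rel' X Y) : Rel' Y X := fun y x => r x y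

/-- Identity relation `1_X`. -/
def relId (X : Type u) : Rel' X X := fun x y => x = y

/-- The graph relation of a function. -/
def graphRel {X Y : Type u} (f : X → Y) : Rel' X Y := fun x y => f x = y

/-- Pointwise order `r ≤ r'` on relations. -/
def relLe {X Y : Type u} (r r' : Rel' X Y) : Prop := ∀ x y, r x y → r' x y

/-- A relation is total if every `x` is related to some `y`. -/
def relTotal {X Y : Type u} (r : Rel' X Y) : Prop := ∀ x, ∃ y, r x y

/-- A relation is surjective if every `y` is related to some `x`. -/
def relSurj {X Y : Type u} (r : Rel' X Y) : Prop := ∀ y, ∃ x, r x y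

/-- A lax extension of a `Set`-functor `F`. -/
structure LaxExt (F : Type u ⥤ Type u) : Type (u + 1) where
  ext : ∀ {X Y : Type u}, Rel' X Y → Rel' (F.obj X) (F.obj Y)
  mono : ∀ {X Y : Type u} (r r' : Rel' X Y), relLe r r' → relLe (ext r) (ext r')
  lcomp : ∀ {X Y Z : Type u} (r : Rel' X Y) (s : Rel' Y Z),
    relLe (relComp (ext s) (ext r)) (ext (relComp s r))
  mapLe : ∀ {X Y : Type u} (f : X → Y), relLe (graphRel (F.map (TypeCat.ofHom f))) (ext (graphRel f))
  mapConvLe : ∀ {X Y : Type u} (f : X → Y),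
    relLe (relConv (graphRel (F.map (TypeCat.ofHom f)))) (ext (relConv (graphRel f)))

/-- A relax extension of a `Set`-functor `F` (a lax extension without (L2)). -/
structure RelaxExt (F : Type u ⥤ Type u) : Type (u + 1) where
  ext : ∀ {X Y : Type u}, Rel' X Y → Rel' (F.obj X) (F.obj Y)
  mono : ∀ {X Y : Type u} (r r' : Rel' X Y), relLe r r' → relLe (ext r) (ext r')
  mapLe : ∀ {X Y : Type u} (f : X → Y), relLe (graphRel (F.map (TypeCat.ofHom f))) (ext (graphRel f))
  mapConvLe : ∀ {X Y : Type u} (f : X → Y),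
    relLe (relConv (graphRel (F.map (TypeCat.ofHom f)))) (ext (relConv (graphRel f)))

/-- Normality (identity-preservation) of a lax extension. -/
def LaxExt.IsNormal {F : Type u ⥤ Type u} (L : LaxExt F) : Prop :=
  ∀ X : Type u, L.ext (relId X) = relId (F.obj X)

/-- The Barr lifting of a relation along a functor, computed from the canonical span. -/
def BarrLift (F : Type u ⥤ Type u) {X Y : Type u} (r : Rel' X Y) :
    Rel' (F.obj X) (F.obj Y) :=
  fun a b => ∃ t : F.obj {p : X × Y // r p.1 p.2},
    F.map (TypeCat.ofHom (fun p : {p : X × Y // r p.1 p.2} => p.1.1)) t = a ∧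
    F.map (TypeCat.ofHom (fun p : {p : X × Y // r p.1 p.2} => p.1.2)) t = b

/-- A commutative square of functions that is a pullback. -/
def IsPBSquare {P X Y Z : Type u} (p₁ : P → X) (p₂ : P → Y) (f : X → Z) (g : Y → Z) : Prop :=
  (∀ p, f (p₁ p) = g (p₂ p)) ∧ ∀ x y, f x = g y → ∃! p, p₁ p = x ∧ p₂ p = y

/-- A commutative square of functions that is a weak pullback. -/
def IsWeakPBSquare {P X Y Z : Type u} (p₁ : P → X) (p₂ : P → Y) (f : X → Z) (g : Y → Z) : Prop :=
  (∀ p, f (p₁ p) = g (p₂ p)) ∧ ∀ x y, f x = g y → ∃ p, p₁ p = x ∧ p₂ p = y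

/-- `F` preserves 1/4-iso pullbacks. -/
def Preserves14IsoPullbacks (F : Type u ⥤ Type u) : Prop :=
  ∀ (P X Y Z : Type u) (p₁ : P → X) (p₂ : P → Y) (f : X → Z) (g : Y → Z),
    Function.Bijective p₂ → IsPBSquare p₁ p₂ f g →
      IsPBSquare (F.map (TypeCat.ofHom p₁)) (F.map (TypeCat.ofHom p₂)) (F.map (TypeCat.ofHom f)) (F.map (TypeCat.ofHom g))

/-- `F` preserves 1/4-iso 2/4-mono pullbacks. -/
def Preserves14Iso24MonoPullbacks (F : Type u ⥤ Type u) : Prop :=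
  ∀ (P X Y Z : Type u) (p₁ : P → X) (p₂ : P → Y) (f : X → Z) (g : Y → Z),
    Function.Bijective p₂ → Function.Injective p₁ → Function.Injective g →
      IsPBSquare p₁ p₂ f g →
      IsPBSquare (F.map (TypeCat.ofHom p₁)) (F.map (TypeCat.ofHom p₂)) (F.map (TypeCat.ofHom f)) (F.map (TypeCat.ofHom g))

/-- `F` preserves 1/4-mono pullbacks. -/
def Preserves14MonoPullbacks (F : Type u ⥤ Type u) : Prop :=
  ∀ (P X Y Z : Type u) (p₁ : P → X) (p₂ : P → Y) (f : X → Z) (g : Y → Z),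
    Function.Injective p₁ → IsPBSquare p₁ p₂ f g →
      IsPBSquare (F.map (TypeCat.ofHom p₁)) (F.map (TypeCat.ofHom p₂)) (F.map (TypeCat.ofHom f)) (F.map (TypeCat.ofHom g))

/-- `F` preserves inverse images. -/
def PreservesInverseImages (F : Type u ⥤ Type u) : Prop :=
  ∀ (P X Y Z : Type u) (p₁ : P → X) (p₂ : P → Y) (f : X → Z) (g : Y → Z),
    Function.Injective p₁ → Function.Injective g → IsPBSquare p₁ p₂ f g →
      IsPBSquare (F.map (TypeCat.ofHom p₁)) (F.map (TypeCat.ofHom p₂)) (F.map (TypeCat.ofHom f)) (F.map (TypeCat.ofHom g))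

/-- `F` weakly preserves 4/4-epi pullbacks. -/
def WeaklyPreserves44EpiPullbacks (F : Type u ⥤ Type u) : Prop :=
  ∀ (P X Y Z : Type u) (p₁ : P → X) (p₂ : P → Y) (f : X → Z) (g : Y → Z),
    Function.Surjective p₁ → Function.Surjective p₂ →
    Function.Surjective f → Function.Surjective g →
    IsPBSquare p₁ p₂ f g →
      IsWeakPBSquare (F.map (TypeCat.ofHom p₁)) (F.map (TypeCat.ofHom p₂)) (F.map (TypeCat.ofHom f)) (F.map (TypeCat.ofHom g))

/-- A (nonempty) composable sequence of relations from `X` to `Z`. -/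
inductive RelChain : Type u → Type u → Type (u + 1)
  | single : ∀ {X Y : Type u}, Rel' X Y → RelChain X Y
  | cons : ∀ {X Y Z : Type u}, Rel' X Y → RelChain Y Z → RelChain X Z

/-- Composite of a composable sequence of relations (first relation applied first). -/
def RelChain.comp : ∀ {X Z : Type u}, RelChain X Z → Rel' X Z
  | _, _, .single r => r
  | _, _, .cons r c => relComp (RelChain.comp c) r

/-- Composite of the Barr liftings of a composable sequence of relations. -/
def RelChain.barr (F : Type u ⥤ Type u) : ∀ {X Z : Type u}, RelChain X Z → Rel' (F.obj X) (F.obj Z)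
  | _, _, .single r => BarrLift F r
  | _, _, .cons r c => relComp (RelChain.barr F c) (BarrLift F r)

/-- Length (number of relations) of a composable sequence. -/
def RelChain.length : ∀ {X Z : Type u}, RelChain X Z → ℕ
  | _, _, .single _ => 1
  | _, _, .cons _ c => RelChain.length c + 1

/-- All relations in a composable sequence are total and surjective. -/
def RelChain.allTS : ∀ {X Z : Type u}, RelChain X Z → Prop
  | _, _, .single r => relTotal r ∧ relSurj r
  | _, _, .cons r c => (relTotal r ∧ relSurj r) ∧ RelChain.allTS c

/-- All relations in a composable sequence except the last one are total and surjective. -/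
def RelChain.initTS : ∀ {X Z : Type u}, RelChain X Z → Prop
  | _, _, .single _ => True
  | _, _, .cons r c => (relTotal r ∧ relSurj r) ∧ RelChain.initTS c

/-- Composite of the images of a composable sequence of relations under an assignment `R`. -/
def RelChain.lift (F : Type u ⥤ Type u)
    (R : ∀ {X Y : Type u}, Rel' X Y → Rel' (F.obj X) (F.obj Y)) :
    ∀ {X Z : Type u}, RelChain X Z → Rel' (F.obj X) (F.obj Z)
  | _, _, .single r => R r
  | _, _, .cons r c => relComp (RelChain.lift F (fun {_ _} s => R s) c) (R r)

/-- `r ⋅ (r° ⋅ r)ⁿ`. -/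
def dfPow {X Y : Type u} (r : Rel' X Y) : ℕ → Rel' X Y
  | 0 => r
  | n + 1 => relComp (dfPow r n) (relComp (relConv r) r)

/-- The difunctional closure `r̂ = ⋁ₙ r ⋅ (r° ⋅ r)ⁿ` of a relation. -/
def difunClosure {X Y : Type u} (r : Rel' X Y) : Rel' X Y :=
  fun x y => ∃ n : ℕ, dfPow r n x y

/-!
Take the lax extension generated by the maps `F f` and their converses: `a` is related to `b`
along `r` when they are linked by a zigzag of `F`-images of maps whose underlying zigzag of maps
lies inside `r`. Normality then says that a zigzag inside the identity links, under `F`, only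
equal elements.

Preservation of 1/4-mono pullbacks means that elements of `F` can be pulled back along
injections. First the zigzag is trimmed, by restricting its starting set along an injection,
until all its backward maps are surjective, so that it relates every point to something. Then an
injective span `Y ↩ S → X` presenting `a`, whose second leg agrees with the zigzag, is pushed
along it: a backward map is crossed by pulling the span back, a forward map by factoring through
the image; the second leg descends to the image because the zigzag relates each point to exactly
one point.
-/

open Function

section ZigzagExtension

variable (F : Type u ⥤ Type u)

theorem map_ofHom_comp {A B C : Type u} (f : A → B) (g : B → C) (x : F.obj A) :
    F.map (TypeCat.ofHom (g ∘ f)) x = F.map (TypeCat.ofHom g) (F.map (TypeCat.ofHom f) x) :=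
  F.map_comp_apply (TypeCat.ofHom f) (TypeCat.ofHom g) x

theorem map_ofHom_id {A : Type u} (x : F.obj A) : F.map (TypeCat.ofHom id) x = x :=
  F.map_id_apply A x

theorem isPBSquare_subtype {Y S Z : Type u} (q : Y → Z) (m : S → Z) :
    IsPBSquare (fun p : {p : Y × S // q p.1 = m p.2} => p.1.1) (fun p => p.1.2) q m :=
  ⟨fun p => p.2, fun y s h =>
    ⟨⟨(y, s), h⟩, ⟨rfl, rfl⟩, fun _ hp => Subtype.ext (Prod.ext hp.1 hp.2)⟩⟩

theorem injective_subtype_fst {Y S Z : Type u} (q : Y → Z) {m : S → Z} (hm : Injective m) :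
    Injective fun p : {p : Y × S // q p.1 = m p.2} => p.1.1 := by
  rintro ⟨⟨y, s⟩, hs⟩ ⟨⟨y', s'⟩, hs'⟩ (rfl : y = y')
  obtain rfl : s = s' := hm (hs.symm.trans hs')
  rfl

variable {F}

theorem Preserves14MonoPullbacks.exists_lift (h : Preserves14MonoPullbacks F) {Y S Z : Type u}
    (q : Y → Z) {m : S → Z} (hm : Injective m) {α : F.obj Y} {τ : F.obj S}
    (hατ : F.map (TypeCat.ofHom q) α = F.map (TypeCat.ofHom m) τ) :
    ∃ δ : F.obj {p : Y × S // q p.1 = m p.2},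
      F.map (TypeCat.ofHom fun p => p.1.1) δ = α ∧
        F.map (TypeCat.ofHom fun p => p.1.2) δ = τ := by
  obtain ⟨δ, hδ, -⟩ :=
    (h _ _ _ _ _ _ q m (injective_subtype_fst q hm) (isPBSquare_subtype q m)).2 α τ hατ
  exact ⟨δ, hδ⟩

inductive Zig : Type u → Type u → Type (u + 1)
  | nil (X : Type u) : Zig X X
  | fwd {A B C : Type u} (f : A → B) (z : Zig B C) : Zig A C
  | bwd {A B C : Type u} (g : B → A) (z : Zig B C) : Zig A C

namespace Zig

def rel : ∀ {A C : Type u}, Zig A C → Rel' A C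
  | _, _, .nil X => relId X
  | _, _, .fwd f z => fun a c => z.rel (f a) c
  | _, _, .bwd g z => fun a c => ∃ b, g b = a ∧ z.rel b c

variable (F) in
def liftRel : ∀ {A C : Type u}, Zig A C → Rel' (F.obj A) (F.obj C)
  | _, _, .nil _ => fun x y => x = y
  | _, _, .fwd f z => fun x y => z.liftRel (F.map (TypeCat.ofHom f) x) y
  | _, _, .bwd g z => fun x y => ∃ x', F.map (TypeCat.ofHom g) x' = x ∧ z.liftRel x' y

def BwdSurjective : ∀ {A C : Type u}, Zig A C → Prop
  | _, _, .nil _ => True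
  | _, _, .fwd _ z => z.BwdSurjective
  | _, _, .bwd g z => Surjective g ∧ z.BwdSurjective

def append : ∀ {A B C : Type u}, Zig A B → Zig B C → Zig A C
  | _, _, _, .nil _, w => w
  | _, _, _, .fwd f z, w => .fwd f (z.append w)
  | _, _, _, .bwd g z, w => .bwd g (z.append w)

theorem rel_append_le {A B C : Type u} (z : Zig A B) (w : Zig B C) :
    relLe (z.append w).rel (relComp w.rel z.rel) := by
  induction z with
  | nil => exact fun a _ h => ⟨a, rfl, h⟩
  | fwd f z ih => exact fun a c h => ih w (f a) c h
  | bwd g z ih =>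
    rintro _ c ⟨b, rfl, h⟩
    obtain ⟨y, hy, hc⟩ := ih w b c h
    exact ⟨y, ⟨b, rfl, hy⟩, hc⟩

variable (F) in
theorem liftRel_append {A B C : Type u} (z : Zig A B) (w : Zig B C) :
    relLe (relComp (w.liftRel F) (z.liftRel F)) ((z.append w).liftRel F) := by
  induction z with
  | nil => rintro _ _ ⟨_, rfl, h⟩; exact h
  | fwd f z ih => exact fun x u hxu => ih w _ u hxu
  | bwd g z ih =>
    rintro _ u ⟨y, ⟨x', rfl, h⟩, hy⟩
    exact ⟨x', rfl, ih w x' u ⟨y, h, hy⟩⟩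

theorem BwdSurjective.rel_total {A C : Type u} {z : Zig A C} (hz : z.BwdSurjective) :
    relTotal z.rel := by
  induction z with
  | nil => exact fun a => ⟨a, rfl⟩
  | fwd f z ih => exact fun a => ih hz (f a)
  | bwd g z ih =>
    intro a
    obtain ⟨b, rfl⟩ := hz.1 a
    obtain ⟨c, hc⟩ := ih hz.2 b
    exact ⟨c, b, rfl, hc⟩

theorem exists_bwdSurjective_of_liftRel (h : Preserves14MonoPullbacks F) {Y X : Type u}
    (z : Zig Y X) {a : F.obj Y} {b : F.obj X} (hab : z.liftRel F a b) :
    ∃ (Y' : Type u) (ι : Y' → Y) (z' : Zig Y' X) (a' : F.obj Y'),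
      Injective ι ∧ z'.BwdSurjective ∧ (∀ y x, z'.rel y x → z.rel (ι y) x) ∧
      F.map (TypeCat.ofHom ι) a' = a ∧ z'.liftRel F a' b := by
  induction z with
  | nil X =>
    exact ⟨X, id, .nil X, a, injective_id, trivial, fun _ _ hx => hx, map_ofHom_id F a, hab⟩
  | @fwd A _ _ f z ih =>
    obtain ⟨Y₁, ι₁, z₁, a₁, hι₁, hz₁, hrel₁, ha₁, hab₁⟩ := ih hab
    obtain ⟨δ, hδa, hδa₁⟩ := h.exists_lift f hι₁ ha₁.symm
    refine ⟨_, _, .fwd (fun p : {p : A × Y₁ // f p.1 = ι₁ p.2} => p.1.2) z₁, δ,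
      injective_subtype_fst f hι₁, hz₁, ?_, hδa, ?_⟩
    · rintro ⟨⟨y, y₁⟩, hy⟩ x hx
      show z.rel (f y) x
      exact hy ▸ hrel₁ y₁ x hx
    · show z₁.liftRel F _ b
      rwa [hδa₁]
  | bwd g z ih =>
    obtain ⟨x', rfl, hab'⟩ := hab
    obtain ⟨Y₁, ι₁, z₁, a₁, hι₁, hz₁, hrel₁, rfl, hab₁⟩ := ih hab'
    refine ⟨Set.range (g ∘ ι₁), Subtype.val,
      .bwd (Set.rangeFactorization (g ∘ ι₁)) z₁, F.map (TypeCat.ofHom (Set.rangeFactorization (g ∘ ι₁))) a₁, Subtype.val_injective,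
      ⟨Set.rangeFactorization_surjective, hz₁⟩, ?_, ?_, a₁, rfl, hab₁⟩
    · rintro _ x ⟨y₁, rfl, hx⟩
      exact ⟨ι₁ y₁, rfl, hrel₁ y₁ x hx⟩
    · rw [← map_ofHom_comp, ← map_ofHom_comp]
      rfl

theorem eq_map_of_liftRel (h : Preserves14MonoPullbacks F) {Y X : Type u} (z : Zig Y X)
    (hz : z.BwdSurjective) {S : Type u} {ι : S → Y} (hι : Injective ι) {σ : S → X}
    (hσ : ∀ s x, z.rel (ι s) x → σ s = x) {γ : F.obj S} {b : F.obj X}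
    (hb : z.liftRel F (F.map (TypeCat.ofHom ι) γ) b) : b = F.map (TypeCat.ofHom σ) γ := by
  induction z generalizing S with
  | nil X =>
    obtain rfl : σ = ι := funext fun s => hσ s (ι s) rfl
    exact hb.symm
  | fwd f z ih =>
    set e := Set.rangeFactorization (f ∘ ι)
    have he : Surjective e := Set.rangeFactorization_surjective
    have hσe : (σ ∘ surjInv he) ∘ e = σ := by
      funext s
      obtain ⟨x, hx⟩ := hz.rel_total (ι s)
      have hfι : f (ι (surjInv he (e s))) = f (ι s) :=
        congrArg Subtype.val (surjInv_eq he (e s))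
      exact (hσ _ x (show z.rel _ x from hfι ▸ hx)).trans (hσ s x hx).symm
    have hb' :
        z.liftRel F (F.map (TypeCat.ofHom Subtype.val) (F.map (TypeCat.ofHom e) γ)) b := by
      rw [← map_ofHom_comp]
      exact (map_ofHom_comp F ι f γ).symm ▸ hb
    refine (ih hz Subtype.val_injective (σ := σ ∘ surjInv he) ?_ hb').trans ?_
    · intro y x hx
      have hy : f (ι (surjInv he y)) = y := congrArg Subtype.val (surjInv_eq he y)
      exact hσ _ x (show z.rel _ x from hy ▸ hx)
    · rw [← map_ofHom_comp, hσe]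
  | bwd g z ih =>
    obtain ⟨x', hx', hb'⟩ := hb
    obtain ⟨δ, rfl, rfl⟩ := h.exists_lift g hι hx'
    rw [← map_ofHom_comp]
    exact ih hz.2 (injective_subtype_fst g hι) (fun p x hx => hσ p.1.2 x ⟨p.1.1, p.2, hx⟩) hb'

theorem eq_of_liftRel_of_rel_le_id (h : Preserves14MonoPullbacks F) {X : Type u} (z : Zig X X)
    (hz : relLe z.rel (relId X)) {a b : F.obj X} (hab : z.liftRel F a b) : a = b := by
  obtain ⟨Y, ι, z', a', -, hz', hrel, rfl, hab'⟩ := z.exists_bwdSurjective_of_liftRel h hab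
  rw [← map_ofHom_id F a'] at hab'
  exact (z'.eq_map_of_liftRel h hz' injective_id (fun y x hx => hz _ _ (hrel y x hx)) hab').symm

end Zig

variable (F) in
def zigzagLaxExt : LaxExt F where
  ext r a b := ∃ z : Zig _ _, relLe z.rel r ∧ z.liftRel F a b
  mono _ _ hr _ _ := fun ⟨z, hz, hab⟩ => ⟨z, fun x y hxy => hr x y (hz x y hxy), hab⟩
  lcomp _ _ := fun a c ⟨b, ⟨z, hz, hab⟩, ⟨w, hw, hbc⟩⟩ =>
    ⟨z.append w, fun x u hxu =>
      let ⟨y, hxy, hyu⟩ := z.rel_append_le w x u hxu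
      ⟨y, hz x y hxy, hw y u hyu⟩, z.liftRel_append F w a c ⟨b, hab, hbc⟩⟩
  mapLe f _ _ hab := ⟨.fwd f (.nil _), fun _ _ hxy => hxy, hab⟩
  mapConvLe f _ _ hab := ⟨.bwd f (.nil _), fun _ _ ⟨_, hy, he⟩ => he ▸ hy, _, hab, rfl⟩

theorem zigzagLaxExt_isNormal (h : Preserves14MonoPullbacks F) : (zigzagLaxExt F).IsNormal :=
  fun X => funext₂ fun _ _ => propext
    ⟨fun ⟨z, hz, hab⟩ => z.eq_of_liftRel_of_rel_le_id h hz hab,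
      fun hab => ⟨.nil X, fun _ _ hxy => hxy, hab⟩⟩

end ZigzagExtension

/-- A Set-functor that preserves 1/4-mono pullbacks admits a normal lax extension. -/
theorem stmt1 (F : Type u ⥤ Type u) (h : Preserves14MonoPullbacks F) :
    ∃ L : LaxExt F, L.IsNormal :=
  ⟨zigzagLaxExt F, zigzagLaxExt_isNormal h⟩
end

section
/- If a Set-functor F admits a normal lax extension, then F preserves 1/4-iso pullbacks. -/
open CategoryTheory

universe u

/-!
Transporting along the bijection `p₂`, the square is a pullback exactly when it commutes and
`f x = g y` forces `x = h y` for `h = p₁ ∘ p₂⁻¹`, i.e. `g° ⋅ f ≤ h°`. A lax extension turns this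
into `(F g)° ⋅ F f ≤ L g° ⋅ L f ≤ L (g° ⋅ f) ≤ L h°`, and normality gives
`F h ⋅ L h° ≤ L (h ⋅ h°) ≤ L 1 = 1`; hence `F f a = F g b` forces `a = F h b`, which is the same
condition for the image square, whose side `F p₂` is again bijective.
-/

open TypeCat

section FunctorToTypes

variable (F : Type u ⥤ Type u)

lemma map_ofHom_comp_apply {X Y Z : Type u} (f : X → Y) (g : Y → Z) (a : F.obj X) :
    F.map (ofHom (g ∘ f)) a = F.map (ofHom g) (F.map (ofHom f) a) :=
  F.map_comp_apply (ofHom f) (ofHom g) a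

lemma map_ofHom_id_apply {X : Type u} (a : F.obj X) : F.map (ofHom (id : X → X)) a = a :=
  F.map_id_apply (X := X) a

lemma map_ofHom_comm_of_comm {P X Y Z : Type u} {p₁ : P → X} {p₂ : P → Y} {f : X → Z}
    {g : Y → Z} (hcomm : ∀ p, f (p₁ p) = g (p₂ p)) (t : F.obj P) :
    F.map (ofHom f) (F.map (ofHom p₁) t) = F.map (ofHom g) (F.map (ofHom p₂) t) := by
  rw [← map_ofHom_comp_apply, ← map_ofHom_comp_apply, show f ∘ p₁ = g ∘ p₂ from funext hcomm]

def mapEquiv {X Y : Type u} (e : X ≃ Y) : F.obj X ≃ F.obj Y where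
  toFun := F.map (ofHom e)
  invFun := F.map (ofHom e.symm)
  left_inv a := by
    rw [← map_ofHom_comp_apply, e.symm_comp_self, map_ofHom_id_apply]
  right_inv b := by
    rw [← map_ofHom_comp_apply, e.self_comp_symm, map_ofHom_id_apply]

end FunctorToTypes

lemma isPBSquare_iff_of_equiv {P X Y Z : Type u} (p₁ : P → X) (e : P ≃ Y) (f : X → Z)
    (g : Y → Z) :
    IsPBSquare p₁ e f g ↔
      (∀ p, f (p₁ p) = g (e p)) ∧ ∀ x y, f x = g y → p₁ (e.symm y) = x := by
  refine and_congr_right fun _ => forall₂_congr fun x y => imp_congr_right fun _ => ?_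
  constructor
  · rintro ⟨p, ⟨rfl, rfl⟩, -⟩
    rw [e.symm_apply_apply]
  · rintro rfl
    exact ⟨e.symm y, ⟨rfl, e.apply_symm_apply y⟩, fun p ⟨_, hp⟩ => e.eq_symm_apply.2 hp⟩

namespace LaxExt

variable {F : Type u ⥤ Type u} (L : LaxExt F)

lemma ext_conv_comp_graph_of_map_eq {X Y Z : Type u} (f : X → Z) (g : Y → Z) {a : F.obj X}
    {b : F.obj Y} (hab : F.map (ofHom f) a = F.map (ofHom g) b) :
    L.ext (relComp (relConv (graphRel g)) (graphRel f)) a b :=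
  L.lcomp _ _ a b ⟨_, L.mapLe f a _ rfl, L.mapConvLe g _ b hab.symm⟩

variable {L} in
lemma IsNormal.map_eq_of_ext_conv_graph (hL : L.IsNormal) {X Y : Type u} (h : Y → X)
    {a : F.obj X} {b : F.obj Y} (hab : L.ext (relConv (graphRel h)) a b) :
    F.map (ofHom h) b = a := by
  have hid : L.ext (relComp (graphRel h) (relConv (graphRel h))) a (F.map (ofHom h) b) :=
    L.lcomp _ _ a _ ⟨b, hab, L.mapLe h b _ rfl⟩
  have hle : relLe (relComp (graphRel h) (relConv (graphRel h))) (relId X) := by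
    rintro x x' ⟨y, rfl, rfl⟩
    rfl
  have hrefl := L.mono _ _ hle a _ hid
  rw [hL X] at hrefl
  exact hrefl.symm

variable {L} in
lemma IsNormal.map_eq_of_map_eq_map (hL : L.IsNormal) {X Y Z : Type u} {f : X → Z}
    {g : Y → Z} {h : Y → X} (hfg : ∀ x y, f x = g y → h y = x) {a : F.obj X} {b : F.obj Y}
    (hab : F.map (ofHom f) a = F.map (ofHom g) b) : F.map (ofHom h) b = a := by
  refine hL.map_eq_of_ext_conv_graph h
    (L.mono _ _ ?_ a b (L.ext_conv_comp_graph_of_map_eq f g hab))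
  rintro x y ⟨z, rfl, hz⟩
  exact hfg x y hz.symm

end LaxExt

/-- A Set-functor admitting a normal lax extension preserves 1/4-iso pullbacks. -/
theorem stmt2 (F : Type u ⥤ Type u) (h : ∃ L : LaxExt F, L.IsNormal) :
    Preserves14IsoPullbacks F := by
  obtain ⟨L, hL⟩ := h
  intro P X Y Z p₁ p₂ f g hp₂ hpb
  let e := Equiv.ofBijective p₂ hp₂
  obtain ⟨hcomm, hfg⟩ := (isPBSquare_iff_of_equiv p₁ e f g).1 hpb
  refine (isPBSquare_iff_of_equiv _ (mapEquiv F e) _ _).2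
    ⟨map_ofHom_comm_of_comm F hcomm, fun a b hab => ?_⟩
  rw [mapEquiv, Equiv.coe_fn_symm_mk, ← map_ofHom_comp_apply]
  exact hL.map_eq_of_map_eq_map hfg hab
end

section
/- Let M be a commutative monoid. The monoid-valued functor M^(−) on sets — sending a set X to the set X →₀ M of finitely supported functions X → M, and a function f : X → Y to the map μ ↦ (y ↦ Σ_{x ∈ f⁻¹(y)} μ(x)) (i.e. Finsupp.mapDomain f) — admits a normal lax extension if and only if M is positive, i.e. for all a, b ∈ M, a + b = 0 implies a = 0. -/
open CategoryTheory

universe u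

/-- The monoid-valued functor `M^(−)` sending `X` to `X →₀ M`. -/
noncomputable def finsuppFunctor (M : Type u) [AddCommMonoid M] : Type u ⥤ Type u where
  obj X := X →₀ M
  map f := TypeCat.ofHom (Finsupp.mapDomain f)
  map_id X := by
    ext μ a
    exact DFunLike.congr_fun (Finsupp.mapDomain_id (v := μ)) a
  map_comp f g := by
    ext μ a
    exact DFunLike.congr_fun (Finsupp.mapDomain_comp (v := μ) (f := ⇑f) (g := ⇑g)) a


/-!
If `M` is positive, a relation `r : X ⇸ Y` is lifted by relating `μ` and `ν` when they carry
the same mass on every union of connected components of the bipartite graph of `r` restricted to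
their supports. Positivity makes the support of `mapDomain f μ` the image of the support of `μ`,
which gives (L3); normality holds because the components of `1_X` are singletons.

Conversely, for the map `i` out of an empty set, `i ⋅ i°` is empty, so for a normal lax extension
`L` the relation `(i ⋅ i°) ⋅ (f° ⋅ f) ≤ 1_X` shows that `F f` identifies no element with `F i t`.
For `f : 2 → 1` and `a + b = 0`, the element `a δ₀ + b δ₁` is identified with `0 = F i 0`.
-/

theorem AddUnits.subsingleton_of_add_eq_zero {M : Type*} [AddCommMonoid M]
    (h : ∀ a b : M, a + b = 0 → a = 0) : Subsingleton (AddUnits M) :=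
  ⟨fun u v => AddUnits.ext <| (h _ _ u.val_neg).trans (h _ _ v.val_neg).symm⟩

namespace Finsupp

variable {X Y M : Type*} [AddCommMonoid M]

theorem sum_mapDomain_apply [DecidableEq Y] (f : X → Y) (μ : X →₀ M) (V : Finset Y) :
    ∑ y ∈ V, mapDomain f μ y = ∑ x ∈ μ.support with f x ∈ V, μ x := by
  simp only [mapDomain, Finsupp.sum, finsetSum_apply, single_apply]
  rw [Finset.sum_comm, Finset.sum_filter]
  exact Finset.sum_congr rfl fun x _ => Finset.sum_ite_eq V (f x) _

theorem mem_support_mapDomain [Subsingleton (AddUnits M)] (f : X → Y) {μ : X →₀ M} {x : X}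
    (hx : x ∈ μ.support) : f x ∈ (mapDomain f μ).support := by
  classical
  rw [mem_support_iff, ← Finset.sum_singleton (mapDomain f μ) (f x), sum_mapDomain_apply,
    Ne, Finset.sum_eq_zero_iff]
  exact fun h => mem_support_iff.mp hx (h x (by simpa using hx))

end Finsupp

@[simp]
theorem finsuppFunctor_map_apply {M : Type u} [AddCommMonoid M] {X Y : Type u} (f : X → Y)
    (μ : X →₀ M) : (finsuppFunctor M).map (TypeCat.ofHom f) μ = Finsupp.mapDomain f μ :=
  rfl

section ClosedPair

variable {X Y : Type u}

/-- `U ∪ V` is a union of connected components of the bipartite graph of `r` on `S ⊔ T`. -/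
def IsClosedPair (r : Rel' X Y) (S : Finset X) (T : Finset Y) (U : Finset X) (V : Finset Y) :
    Prop :=
  U ⊆ S ∧ V ⊆ T ∧ (∀ x ∈ U, ∀ y ∈ T, r x y → y ∈ V) ∧ ∀ y ∈ V, ∀ x ∈ S, r x y → x ∈ U

theorem isClosedPair_relConv {r : Rel' X Y} {S : Finset X} {T : Finset Y} {U : Finset X}
    {V : Finset Y} : IsClosedPair (relConv r) T S V U ↔ IsClosedPair r S T U V := by
  unfold IsClosedPair relConv
  tauto

theorem IsClosedPair.anti {r r' : Rel' X Y} (h : relLe r r') {S : Finset X} {T : Finset Y}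
    {U : Finset X} {V : Finset Y} (hc : IsClosedPair r' S T U V) : IsClosedPair r S T U V :=
  ⟨hc.1, hc.2.1, fun x hx y hy hr => hc.2.2.1 x hx y hy (h x y hr),
    fun y hy x hx hr => hc.2.2.2 y hy x hx (h x y hr)⟩

end ClosedPair

section FinsuppLift

variable {M : Type u} [AddCommMonoid M] {X Y Z : Type u}

variable (M) in
def finsuppLift (r : Rel' X Y) : Rel' (X →₀ M) (Y →₀ M) :=
  fun μ ν => ∀ U V, IsClosedPair r μ.support ν.support U V → ∑ x ∈ U, μ x = ∑ y ∈ V, ν y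

theorem finsuppLift_relConv {r : Rel' X Y} {μ : X →₀ M} {ν : Y →₀ M} :
    finsuppLift M (relConv r) ν μ ↔ finsuppLift M r μ ν :=
  ⟨fun h U V hc => (h V U (isClosedPair_relConv.mpr hc)).symm,
    fun h V U hc => (h U V (isClosedPair_relConv.mp hc)).symm⟩

theorem finsuppLift_mono {r r' : Rel' X Y} (h : relLe r r') :
    relLe (finsuppLift M r) (finsuppLift M r') :=
  fun _ _ hμν U V hc => hμν U V (hc.anti h)

theorem finsuppLift.exists_right {r : Rel' X Y} {μ : X →₀ M} {ν : Y →₀ M}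
    (h : finsuppLift M r μ ν) {x : X} (hx : x ∈ μ.support) : ∃ y ∈ ν.support, r x y := by
  classical
  by_contra! hxr
  have hc : IsClosedPair r μ.support ν.support {x} ∅ :=
    ⟨by simpa using hx, by simp, fun x' hx' y hy hr => by
      obtain rfl := Finset.mem_singleton.mp hx'; exact absurd hr (hxr y hy), by simp⟩
  have := h _ _ hc
  simp only [Finset.sum_singleton, Finset.sum_empty] at this
  exact Finsupp.mem_support_iff.mp hx this

theorem finsuppLift.exists_left {r : Rel' X Y} {μ : X →₀ M} {ν : Y →₀ M}
    (h : finsuppLift M r μ ν) {y : Y} (hy : y ∈ ν.support) : ∃ x ∈ μ.support, r x y :=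
  finsuppLift.exists_right (finsuppLift_relConv.mpr h) hy

theorem finsuppLift_relComp (r : Rel' X Y) (s : Rel' Y Z) :
    relLe (relComp (finsuppLift M s) (finsuppLift M r)) (finsuppLift M (relComp s r)) := by
  classical
  rintro μ π ⟨ν, hr, hs⟩ U W ⟨hU, hW, hUW, hWU⟩
  set V := ν.support.filter fun y => (∃ x ∈ U, r x y) ∨ ∃ z ∈ W, s y z
  have hrUV : IsClosedPair r μ.support ν.support U V := by
    refine ⟨hU, Finset.filter_subset _ _,
      fun x hx y hy hxy => Finset.mem_filter.mpr ⟨hy, .inl ⟨x, hx, hxy⟩⟩,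
      fun y hy x hx hxy => ?_⟩
    obtain ⟨hy, ⟨x', hx', hx'y⟩ | ⟨z, hz, hyz⟩⟩ := Finset.mem_filter.mp hy
    · obtain ⟨z, hz, hyz⟩ := hs.exists_right hy
      exact hWU z (hUW x' hx' z hz ⟨y, hx'y, hyz⟩) x hx ⟨y, hxy, hyz⟩
    · exact hWU z hz x hx ⟨y, hxy, hyz⟩
  have hsVW : IsClosedPair s ν.support π.support V W := by
    refine ⟨Finset.filter_subset _ _, hW, fun y hy z hz hyz => ?_,
      fun z hz y hy hyz => Finset.mem_filter.mpr ⟨hy, .inr ⟨z, hz, hyz⟩⟩⟩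
    obtain ⟨hy, ⟨x, hx, hxy⟩ | ⟨z', hz', hyz'⟩⟩ := Finset.mem_filter.mp hy
    · exact hUW x hx z hz ⟨y, hxy, hyz⟩
    · obtain ⟨x, hx, hxy⟩ := hr.exists_left hy
      exact hUW x (hWU z' hz' x hx ⟨y, hxy, hyz'⟩) z hz ⟨y, hxy, hyz⟩
  exact (hr U V hrUV).trans (hs V W hsVW)

theorem finsuppLift_graphRel [Subsingleton (AddUnits M)] (f : X → Y) (μ : X →₀ M) :
    finsuppLift M (graphRel f) μ (Finsupp.mapDomain f μ) := by
  classical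
  rintro U V ⟨hU, -, hUV, hVU⟩
  have hU_eq : U = μ.support.filter (f · ∈ V) := by
    ext x
    simp only [Finset.mem_filter]
    exact ⟨fun hx => ⟨hU hx, hUV x hx _ (Finsupp.mem_support_mapDomain f (hU hx)) rfl⟩,
      fun ⟨hx, hfx⟩ => hVU _ hfx x hx rfl⟩
  rw [hU_eq, Finsupp.sum_mapDomain_apply]

theorem finsuppLift_relId (X : Type u) : finsuppLift M (relId X) = relId (X →₀ M) := by
  classical
  funext μ ν
  apply propext
  constructor
  · intro h
    ext x
    have hc : IsClosedPair (relId X) μ.support ν.support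
        (μ.support.filter (· = x)) (ν.support.filter (· = x)) :=
      ⟨Finset.filter_subset _ _, Finset.filter_subset _ _,
        fun x' hx' y hy (hxy : x' = y) =>
          Finset.mem_filter.mpr ⟨hy, hxy ▸ (Finset.mem_filter.mp hx').2⟩,
        fun y hy x' hx' (hxy : x' = y) =>
          Finset.mem_filter.mpr ⟨hx', hxy ▸ (Finset.mem_filter.mp hy).2⟩⟩
    have hμ := Finsupp.sum_ite_self_eq' μ x
    have hν := Finsupp.sum_ite_self_eq' ν x
    rw [Finsupp.sum, ← Finset.sum_filter] at hμ hν
    rw [← hμ, ← hν, h _ _ hc]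
  · rintro rfl U V ⟨hU, hV, hUV, hVU⟩
    congr 1
    ext x
    exact ⟨fun hx => hUV x hx x (hU hx) rfl, fun hx => hVU x hx x (hV hx) rfl⟩

variable (M) in
noncomputable def finsuppLaxExt [Subsingleton (AddUnits M)] : LaxExt (finsuppFunctor M) where
  ext := finsuppLift M
  mono _ _ := finsuppLift_mono
  lcomp := finsuppLift_relComp
  mapLe f μ _ h := h ▸ finsuppLift_graphRel f μ
  mapConvLe f _ μ h := finsuppLift_relConv.mpr (h ▸ finsuppLift_graphRel f μ)

theorem finsuppLaxExt_isNormal [Subsingleton (AddUnits M)] : (finsuppLaxExt M).IsNormal :=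
  finsuppLift_relId

end FinsuppLift

theorem LaxExt.IsNormal.eq_of_map_eq {F : Type u ⥤ Type u} {L : LaxExt F} (hL : L.IsNormal)
    {E X Y : Type u} [IsEmpty E] (i : E → X) (f : X → Y) (t : F.obj E) (a : F.obj X)
    (h : F.map (TypeCat.ofHom f) a = F.map (TypeCat.ofHom f) (F.map (TypeCat.ofHom i) t)) :
    a = F.map (TypeCat.ofHom i) t := by
  set b := F.map (TypeCat.ofHom i) t
  have hker : L.ext (relComp (relConv (graphRel f)) (graphRel f)) a b :=
    L.lcomp _ _ a b ⟨_, L.mapLe f a _ h, L.mapConvLe f _ b rfl⟩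
  have hempty : L.ext (relComp (graphRel i) (relConv (graphRel i))) b b :=
    L.lcomp _ _ b b ⟨t, L.mapConvLe i b t rfl, L.mapLe i t b rfl⟩
  have hle_id : relLe (relComp (relComp (graphRel i) (relConv (graphRel i)))
      (relComp (relConv (graphRel f)) (graphRel f))) (relId X) := by
    rintro _ _ ⟨_, -, e, -⟩
    exact isEmptyElim e
  have hab := L.mono _ _ hle_id a b (L.lcomp _ _ a b ⟨b, hker, hempty⟩)
  rwa [hL X] at hab

theorem eq_zero_of_add_eq_zero_of_isNormal {M : Type u} [AddCommMonoid M]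
    {L : LaxExt (finsuppFunctor M)} (hL : L.IsNormal) {a b : M} (hab : a + b = 0) : a = 0 := by
  classical
  let μ : ULift.{u} Bool →₀ M := Finsupp.single ⟨false⟩ a + Finsupp.single ⟨true⟩ b
  have hμ : μ = Finsupp.mapDomain (fun e : PEmpty.{u + 1} => e.elim) 0 :=
    hL.eq_of_map_eq (fun e : PEmpty => e.elim) (fun _ => PUnit.unit.{u + 1})
      (0 : PEmpty →₀ M) μ <| by
      simp only [finsuppFunctor_map_apply]
      rw [Finsupp.mapDomain_zero, Finsupp.mapDomain_zero, Finsupp.mapDomain_add,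
        Finsupp.mapDomain_single, Finsupp.mapDomain_single, ← Finsupp.single_add, hab,
        Finsupp.single_zero]
  simpa [μ] using DFunLike.congr_fun hμ ⟨false⟩

/-- The monoid-valued functor admits a normal lax extension iff the monoid is positive. -/
theorem stmt4 (M : Type u) [AddCommMonoid M] :
    (∃ L : LaxExt (finsuppFunctor M), L.IsNormal) ↔ ∀ a b : M, a + b = 0 → a = 0 := by
  constructor
  · rintro ⟨L, hL⟩ a b
    exact eq_zero_of_add_eq_zero_of_isNormal hL
  · intro hpos
    have := AddUnits.subsingleton_of_add_eq_zero hpos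
    exact ⟨finsuppLaxExt M, finsuppLaxExt_isNormal⟩
end

section
/- A Set-functor F preserves 1/4-mono pullbacks if and only if it preserves inverse images. -/
/-!
If `p₁` is injective, then `g` is injective on `Y₀ = g⁻¹(f X)`: two points of `Y₀` over the same
`f x` come from points of `P` over the same `x`. So the square is the pasting of two inverse
images, namely `P` over `X` and `Y₀` (meeting in `f X`), and `Y₀ ⊆ Y` over `f X ⊆ Z`. A functor
preserving inverse images preserves both, and pasting gives back the original square.
-/

open CategoryTheory

universe u

open Set

lemma map_ofHom_comp_s5 (F : Type u ⥤ Type u) {X Y Z : Type u} (f : X → Y) (g : Y → Z) :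
    ⇑(F.map (TypeCat.ofHom (g ∘ f))) = F.map (TypeCat.ofHom g) ∘ F.map (TypeCat.ofHom f) := by
  ext x
  exact Functor.map_comp_apply F (TypeCat.ofHom f) (TypeCat.ofHom g) x

theorem isPBSquare_preimage {Y Z : Type u} (g : Y → Z) (S : Set Z) :
    IsPBSquare (Subtype.val : g ⁻¹' S → Y) (S.restrictPreimage g) g Subtype.val := by
  refine ⟨fun _ => rfl, fun y z hyz =>
    ⟨⟨y, by rw [mem_preimage, hyz]; exact z.2⟩, ⟨rfl, Subtype.ext hyz⟩, ?_⟩⟩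
  rintro y' ⟨rfl, -⟩
  rfl

namespace IsPBSquare

variable {P X Y Z : Type u} {p₁ : P → X} {p₂ : P → Y} {f : X → Z} {g : Y → Z}

theorem symm (h : IsPBSquare p₁ p₂ f g) : IsPBSquare p₂ p₁ g f :=
  ⟨fun p => (h.1 p).symm, fun y x hyx => by simpa only [and_comm] using h.2 x y hyx.symm⟩

theorem paste {A G : Type u} {q : P → A} {i : A → X} {f₀ : A → G} {m : G → Z} {e : Y → G}
    (hL : IsPBSquare q p₂ f₀ e) (hR : IsPBSquare i f₀ f m) :
    IsPBSquare (i ∘ q) p₂ f (m ∘ e) := by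
  refine ⟨fun p => by simp only [Function.comp_apply, hR.1, hL.1], fun x y hxy => ?_⟩
  obtain ⟨a, ⟨rfl, ha⟩, ha_unique⟩ := hR.2 x (e y) hxy
  obtain ⟨p, ⟨rfl, rfl⟩, hp_unique⟩ := hL.2 a y ha
  refine ⟨p, ⟨rfl, rfl⟩, fun p' hp' => hp_unique p' ⟨ha_unique _ ⟨hp'.1, ?_⟩, hp'.2⟩⟩
  rw [hL.1, hp'.2]

theorem corestrict_range (h : IsPBSquare p₁ p₂ f g) :
    IsPBSquare p₁ (codRestrict p₂ (g ⁻¹' range f) fun p => ⟨p₁ p, h.1 p⟩)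
      (rangeFactorization f) ((range f).restrictPreimage g) := by
  refine ⟨fun p => Subtype.ext (h.1 p), fun x y hxy => ?_⟩
  obtain ⟨p, ⟨hp₁, hp₂⟩, hp_unique⟩ := h.2 x y (congrArg Subtype.val hxy)
  exact ⟨p, ⟨hp₁, Subtype.ext hp₂⟩,
    fun p' hp' => hp_unique p' ⟨hp'.1, congrArg Subtype.val hp'.2⟩⟩

theorem injective_restrictPreimage_range (h : IsPBSquare p₁ p₂ f g)
    (hp₁ : Function.Injective p₁) : Function.Injective ((range f).restrictPreimage g) := by
  rintro ⟨y, x, hx⟩ ⟨y', _⟩ hyy'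
  have hgy : g y = g y' := congrArg Subtype.val hyy'
  obtain ⟨p, ⟨hp₁x, rfl⟩, -⟩ := h.2 x y hx
  obtain ⟨p', ⟨hp'₁x, rfl⟩, -⟩ := h.2 x y' (hx.trans hgy)
  exact Subtype.ext (congrArg p₂ (hp₁ (hp₁x.trans hp'₁x.symm)))

end IsPBSquare

theorem preserves14MonoPullbacks_of_preservesInverseImages {F : Type u ⥤ Type u}
    (hF : PreservesInverseImages F) : Preserves14MonoPullbacks F := by
  intro P X Y Z p₁ p₂ f g hp₁ hpb
  have hL := hF _ _ _ _ _ _ _ _ hp₁ (hpb.injective_restrictPreimage_range hp₁)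
    hpb.corestrict_range
  have hR := hF _ _ _ _ _ _ _ _ Subtype.val_injective Subtype.val_injective
    (isPBSquare_preimage g (range f))
  have hpaste := (hL.symm.paste hR).symm
  rwa [← map_ofHom_comp_s5, ← map_ofHom_comp_s5] at hpaste

/-- A Set-functor preserves 1/4-mono pullbacks iff it preserves inverse images. -/
theorem stmt5 (F : Type u ⥤ Type u) :
    Preserves14MonoPullbacks F ↔ PreservesInverseImages F :=
  ⟨fun h _ _ _ _ _ _ _ _ hp₁ _ hpb => h _ _ _ _ _ _ _ _ hp₁ hpb,
    preserves14MonoPullbacks_of_preservesInverseImages⟩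
end

section
/- A Set-functor F admits a normal lax extension if and only if for every set X and every composable sequence of relations r₁, …, rₙ with rₙ ⋅ … ⋅ r₁ = 1_X, one has F̄rₙ ⋅ … ⋅ F̄r₁ ≤ 1_{F X}, where F̄ denotes the Barr lifting of F. -/
open CategoryTheory

universe u

/-!
Every lax extension `L` contains the Barr lifting, since `F̄r = Fπ₂ ⋅ (Fπ₁)° ≤ L π₂ ⋅ L π₁° ≤ L r`;
by (L2) a composite of Barr liftings then lies below `L` of the composite, which gives necessity.

Conversely, let `L r` be the union of the composites `F̄rₙ ⋅ … ⋅ F̄r₁` over all chains with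
`rₙ ⋅ … ⋅ r₁ ≤ r`; it is a lax extension, and it is normal as soon as the condition holds for chains
composing to a *sub*identity `s ≤ 1_X`. Such a chain is turned into one composing to `1_X`: with
`B = {x | ¬ s x x}` and the codiagonal `p : X + B → X`, the chain `p°, r₁ + 1_B, …, rₙ + 1_B, p`
composes to `p ⋅ (s + 1_B) ⋅ p° = 1_X`, and its Barr lifting relates every pair that the Barr
lifting of the original chain relates.
-/

section Relations

variable {X Y Z W : Type u}

lemma relComp_mono {r r' : Rel' X Y} {s s' : Rel' Y Z} (hr : relLe r r') (hs : relLe s s') :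
    relLe (relComp s r) (relComp s' r') := by
  rintro x z ⟨y, hxy, hyz⟩
  exact ⟨y, hr _ _ hxy, hs _ _ hyz⟩

lemma relComp_assoc (r : Rel' X Y) (s : Rel' Y Z) (t : Rel' Z W) :
    relComp t (relComp s r) = relComp (relComp t s) r := by
  funext x w
  exact propext ⟨fun ⟨z, ⟨y, h₁, h₂⟩, h₃⟩ => ⟨y, h₁, z, h₂, h₃⟩,
    fun ⟨y, h₁, z, h₂, h₃⟩ => ⟨z, ⟨y, h₁, h₂⟩, h₃⟩⟩

lemma relComp_relId (r : Rel' X Y) : relComp (relId Y) r = r := by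
  funext x y
  exact propext ⟨fun ⟨_, h, rfl⟩ => h, fun h => ⟨y, h, rfl⟩⟩

lemma liftRel_relComp {X' Y' Z' : Type u} (r : Rel' X Y) (s : Rel' Y Z) (r' : Rel' X' Y')
    (s' : Rel' Y' Z') :
    Sum.LiftRel (relComp s r) (relComp s' r') = relComp (Sum.LiftRel s s') (Sum.LiftRel r r') := by
  funext p q
  apply propext
  constructor
  · rintro (⟨⟨y, h₁, h₂⟩⟩ | ⟨⟨y, h₁, h₂⟩⟩)
    exacts [⟨.inl y, .inl h₁, .inl h₂⟩, ⟨.inr y, .inr h₁, .inr h₂⟩]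
  · rintro ⟨_, (h₁ | h₁), h₂⟩ <;> cases h₂
    exacts [.inl ⟨_, h₁, ‹_›⟩, .inr ⟨_, h₁, ‹_›⟩]

end Relations

section BarrLift

variable {F : Type u ⥤ Type u} {X Y X' Y' : Type u}

lemma map_apply_map_apply_of_leftInverse {f : X → Y} {g : Y → X} (hgf : Function.LeftInverse g f)
    (a : F.obj X) : F.map (TypeCat.ofHom g) (F.map (TypeCat.ofHom f) a) = a := by
  rw [← F.map_comp_apply]
  have hid : TypeCat.ofHom f ≫ TypeCat.ofHom g = 𝟙 X := by ext x; exact hgf x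
  rw [hid, F.map_id_apply]

lemma graphRel_map_le_barrLift (f : X → Y) :
    relLe (graphRel (F.map (TypeCat.ofHom f))) (BarrLift F (graphRel f)) := by
  rintro a _ rfl
  exact ⟨F.map (TypeCat.ofHom fun x => ⟨(x, f x), rfl⟩) a,
    map_apply_map_apply_of_leftInverse (fun _ => rfl) a, by rw [← F.map_comp_apply]; rfl⟩

lemma relConv_graphRel_map_le_barrLift (f : X → Y) :
    relLe (relConv (graphRel (F.map (TypeCat.ofHom f)))) (BarrLift F (relConv (graphRel f))) := by
  rintro _ a rfl
  exact ⟨F.map (TypeCat.ofHom fun x => ⟨(f x, x), rfl⟩) a,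
    by rw [← F.map_comp_apply]; rfl, map_apply_map_apply_of_leftInverse (fun _ => rfl) a⟩

lemma barrLift_relId_self (a : F.obj X) : BarrLift F (relId X) a a :=
  graphRel_map_le_barrLift id a a (by exact F.map_id_apply X a)

lemma barrLift_map_map {r : Rel' X Y} {r' : Rel' X' Y'} {j : X → X'} {k : Y → Y'}
    (h : ∀ x y, r x y → r' (j x) (k y)) {a : F.obj X} {b : F.obj Y} (hab : BarrLift F r a b) :
    BarrLift F r' (F.map (TypeCat.ofHom j) a) (F.map (TypeCat.ofHom k) b) := by
  obtain ⟨t, rfl, rfl⟩ := hab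
  exact ⟨F.map (TypeCat.ofHom fun p => ⟨(j p.1.1, k p.1.2), h _ _ p.2⟩) t,
    by rw [← F.map_comp_apply, ← F.map_comp_apply]; rfl,
    by rw [← F.map_comp_apply, ← F.map_comp_apply]; rfl⟩

lemma barrLift_le_ext (L : LaxExt F) (r : Rel' X Y) : relLe (BarrLift F r) (L.ext r) := by
  rintro a b ⟨t, rfl, rfl⟩
  refine L.mono _ _ ?_ _ _ (L.lcomp _ _ _ _ ⟨t, L.mapConvLe _ _ _ rfl, L.mapLe _ _ _ rfl⟩)
  rintro x y ⟨p, rfl, rfl⟩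
  exact p.2

end BarrLift

namespace RelChain

variable {F : Type u ⥤ Type u}

def append : ∀ {X Y Z : Type u}, RelChain X Y → RelChain Y Z → RelChain X Z
  | _, _, _, .single r, d => .cons r d
  | _, _, _, .cons r c, d => .cons r (c.append d)

lemma comp_append : ∀ {X Y Z : Type u} (c : RelChain X Y) (d : RelChain Y Z),
    (c.append d).comp = relComp d.comp c.comp
  | _, _, _, .single _, _ => rfl
  | _, _, _, .cons r c, d => by
    change relComp (c.append d).comp r = _
    rw [comp_append c d]
    exact (relComp_assoc _ _ _).symm

lemma barr_append : ∀ {X Y Z : Type u} (c : RelChain X Y) (d : RelChain Y Z),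
    (c.append d).barr F = relComp (d.barr F) (c.barr F)
  | _, _, _, .single _, _ => rfl
  | _, _, _, .cons r c, d => by
    change relComp ((c.append d).barr F) (BarrLift F r) = _
    rw [barr_append c d]
    exact (relComp_assoc _ _ _).symm

lemma barr_le_ext (L : LaxExt F) : ∀ {X Y : Type u} (c : RelChain X Y),
    relLe (c.barr F) (L.ext c.comp)
  | _, _, .single r => barrLift_le_ext L r
  | _, _, .cons r c => fun _ _ h =>
    L.lcomp _ _ _ _ (relComp_mono (barrLift_le_ext L r) (c.barr_le_ext L) _ _ h)

def sumRight (W : Type u) : ∀ {X Z : Type u}, RelChain X Z → RelChain (X ⊕ W) (Z ⊕ W)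
  | _, _, .single r => .single (Sum.LiftRel r (relId W))
  | _, _, .cons r c => .cons (Sum.LiftRel r (relId W)) (c.sumRight W)

lemma comp_sumRight (W : Type u) : ∀ {X Z : Type u} (c : RelChain X Z),
    (c.sumRight W).comp = Sum.LiftRel c.comp (relId W)
  | _, _, .single _ => rfl
  | _, _, .cons r c => by
    change relComp (c.sumRight W).comp _ = _
    rw [comp_sumRight W c, ← liftRel_relComp, relComp_relId]
    rfl

lemma barr_sumRight_map_inl (W : Type u) : ∀ {X Z : Type u} (c : RelChain X Z) {a b},
    c.barr F a b →
      (c.sumRight W).barr F (F.map (TypeCat.ofHom Sum.inl) a) (F.map (TypeCat.ofHom Sum.inl) b)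
  | _, _, .single _, _, _, h => barrLift_map_map (fun _ _ => .inl) h
  | _, _, .cons _ c, _, _, h => by
    obtain ⟨_, h₁, h₂⟩ := h
    exact ⟨_, barrLift_map_map (fun _ _ => .inl) h₁, c.barr_sumRight_map_inl W h₂⟩

end RelChain

section Normality

variable {F : Type u ⥤ Type u}

def chainBarrExt (F : Type u ⥤ Type u) : LaxExt F where
  ext {X Y} r a b := ∃ c : RelChain X Y, relLe c.comp r ∧ c.barr F a b
  mono _ _ h := fun _ _ ⟨c, hc, hab⟩ => ⟨c, fun x y hxy => h x y (hc x y hxy), hab⟩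
  lcomp _ _ := by
    rintro a b ⟨m, ⟨c, hc, ham⟩, ⟨d, hd, hmb⟩⟩
    refine ⟨c.append d, ?_, ?_⟩
    · rw [RelChain.comp_append]
      exact relComp_mono hc hd
    · rw [RelChain.barr_append]
      exact ⟨m, ham, hmb⟩
  mapLe f a b h := ⟨.single (graphRel f), fun _ _ => id, graphRel_map_le_barrLift f a b h⟩
  mapConvLe f a b h :=
    ⟨.single (relConv (graphRel f)), fun _ _ => id, relConv_graphRel_map_le_barrLift f a b h⟩

lemma barr_le_relId_of_comp_le
    (hF : ∀ (X : Type u) (c : RelChain X X), c.comp = relId X →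
      relLe (c.barr F) (relId (F.obj X)))
    {X : Type u} (c : RelChain X X) (hc : relLe c.comp (relId X)) :
    relLe (c.barr F) (relId (F.obj X)) := by
  let B := {x // ¬ c.comp x x}
  let p : X ⊕ B → X := Sum.elim id Subtype.val
  let c' : RelChain X X :=
    .cons (relConv (graphRel p)) ((c.sumRight B).append (.single (graphRel p)))
  have hc' : c'.comp = relId X := by
    change relComp ((c.sumRight B).append _).comp _ = _
    rw [RelChain.comp_append, RelChain.comp_sumRight]
    funext x y
    apply propext
    constructor
    · rintro ⟨u, hu, v, huv, hv⟩
      rcases huv with ⟨h⟩ | ⟨rfl⟩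
      exacts [hu.symm.trans ((hc _ _ h).trans hv), hu.symm.trans hv]
    · rintro rfl
      by_cases h : c.comp x x
      exacts [⟨.inl x, rfl, .inl x, .inl h, rfl⟩, ⟨.inr ⟨x, h⟩, rfl, .inr ⟨x, h⟩, .inr rfl, rfl⟩]
  intro a b hab
  refine hF X c' hc' a b (⟨F.map (TypeCat.ofHom Sum.inl) a, ?_, ?_⟩ : relComp _ _ a b)
  · exact relConv_graphRel_map_le_barrLift p _ _
      (map_apply_map_apply_of_leftInverse (fun _ => rfl) a)
  · rw [RelChain.barr_append]
    exact ⟨_, c.barr_sumRight_map_inl B hab,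
      graphRel_map_le_barrLift p _ _ (map_apply_map_apply_of_leftInverse (fun _ => rfl) b)⟩

lemma chainBarrExt_isNormal
    (hF : ∀ (X : Type u) (c : RelChain X X), c.comp = relId X →
      relLe (c.barr F) (relId (F.obj X))) :
    (chainBarrExt F).IsNormal := by
  intro X
  funext a b
  exact propext ⟨fun ⟨c, hc, hab⟩ => barr_le_relId_of_comp_le hF c hc a b hab,
    fun h => ⟨.single (relId X), fun _ _ => id, h ▸ barrLift_relId_self a⟩⟩

end Normality

/-- A Set-functor admits a normal lax extension iff for every composable sequence of
relations composing to an identity, the composite of the Barr liftings is a subidentity. -/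
theorem stmt9 (F : Type u ⥤ Type u) :
    (∃ L : LaxExt F, L.IsNormal) ↔
      ∀ (X : Type u) (c : RelChain X X), RelChain.comp c = relId X →
        relLe (RelChain.barr F c) (relId (F.obj X)) := by
  refine ⟨fun ⟨L, hL⟩ X c hc => ?_, fun hF => ⟨chainBarrExt F, chainBarrExt_isNormal hF⟩⟩
  simpa only [hc, hL X] using c.barr_le_ext L
end

section
/- Let F be a Set-functor that preserves 1/4-iso pullbacks, and let r₁ : X ⇸ Y, r₂ : Y ⇸ Z and r₃ : Z ⇸ W be relations. Then there exist relations s₁ : X ⇸ Y', s₂ : Y' ⇸ Z' and s₃ : Z' ⇸ W such that s₁, s₂, s₃ is a Barr upper bound of r₁, r₂, r₃ and moreover: (1) for all y, y' ∈ Y' and z ∈ Z', if y ≠ y', s₂ relates y to z and s₂ relates y' to z, then z lies in the domain of s₃; (2) for all y ∈ Y' and z, z' ∈ Z', if z ≠ z', s₂ relates y to z and s₂ relates y to z', then y lies in the codomain of s₁. -/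
open CategoryTheory

universe u

/-!
Replace `Y` by the span `R₂` of `r₂` in which the fibre over each point of the codomain of `r₁`
is collapsed to that point, and `Z` likewise by collapsing over the domain of `r₃`. Then `s₂` is
the image of `R₂`, and `s₁`, `s₃` are `r₁`, `r₃` read through the projections to `Y` and `Z`. An
uncollapsed point comes from a single pair of `r₂`, which gives the two splitting conditions.
For the Barr inequality, the map `R₁ → Y'` hits only points with singleton fibres over `Y`, so
it is the pullback of `Y' → Y` along `R₁ → Y`, with an identity side. Since `F` preserves this
pullback, `F(R₁ → Y')` and `F(R₂ → Y')` agree on the Barr witnesses; likewise on the `W` side.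
-/

abbrev RelSpan {X Y : Type u} (r : Rel' X Y) : Type u := {p : X × Y // r p.1 p.2}

section

variable {F : Type u ⥤ Type u}

lemma map_ofHom_map_ofHom {X Y Z : Type u} (f : X → Y) (g : Y → Z) (t : F.obj X) :
    F.map (TypeCat.ofHom g) (F.map (TypeCat.ofHom f) t) = F.map (TypeCat.ofHom (g ∘ f)) t :=
  (F.map_comp_apply (TypeCat.ofHom f) (TypeCat.ofHom g) t).symm

lemma barrLift_map_map_s13 {P X Y : Type u} {s : Rel' X Y} (f : P → X) (g : P → Y)
    (hs : ∀ p, s (f p) (g p)) (t : F.obj P) :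
    BarrLift F s (F.map (TypeCat.ofHom f) t) (F.map (TypeCat.ofHom g) t) :=
  ⟨F.map (TypeCat.ofHom fun p => ⟨(f p, g p), hs p⟩) t,
    map_ofHom_map_ofHom _ _ t, map_ofHom_map_ofHom _ _ t⟩

/-- If `j c` is the only point in its `π`-fibre, the square `j, id, π, π ∘ j` is a pullback
with an identity side, so `F` maps it to a pullback. -/
lemma Preserves14IsoPullbacks.map_eq_of_fibre_eq_singleton (h : Preserves14IsoPullbacks F)
    {C D E : Type u} (j : C → D) (π : D → E) (hj : ∀ c d, π d = π (j c) → d = j c)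
    {x : F.obj D} {u : F.obj C}
    (hx : F.map (TypeCat.ofHom π) x = F.map (TypeCat.ofHom (π ∘ j)) u) :
    F.map (TypeCat.ofHom j) u = x := by
  have hpb : IsPBSquare j id π (π ∘ j) :=
    ⟨fun _ => rfl, fun d c hdc => ⟨c, ⟨(hj c d hdc).symm, rfl⟩, fun _ hc => hc.2⟩⟩
  obtain ⟨v, ⟨hvx, hvu⟩, -⟩ := (h C D C E j id π (π ∘ j) Function.bijective_id hpb).2 x u hx
  rw [← hvx, ← hvu]
  exact congrArg _ (F.map_id_apply C v)

end

/-- `P` with each `q`-fibre over a point of `S` collapsed to that point. -/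
def Collapse {P Y : Type u} (q : P → Y) (S : Set Y) : Type u :=
  {p : P // q p ∉ S} ⊕ S

namespace Collapse

variable {P Y : Type u} {q : P → Y} {S : Set Y}

open Classical in
noncomputable def mk (q : P → Y) (S : Set Y) (p : P) : Collapse q S :=
  if hp : q p ∈ S then .inr ⟨q p, hp⟩ else .inl ⟨p, hp⟩

def proj : Collapse q S → Y :=
  Sum.elim (fun p => q p.1) Subtype.val

@[simp]
lemma proj_mk (p : P) : proj (mk q S p) = q p := by
  by_cases hp : q p ∈ S <;> simp [mk, hp, proj]

lemma mem_of_mk_eq_mk {p p' : P} (h : mk q S p = mk q S p') (hne : p ≠ p') : q p ∈ S := by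
  by_contra hp
  by_cases hp' : q p' ∈ S <;> simp only [mk, hp, hp', ↓reduceDIte, reduceCtorEq] at h
  exact hne (congrArg Subtype.val (Sum.inl.inj h))

lemma eq_inr_of_proj_eq {c : Collapse q S} {y : S} (hc : proj c = y) : c = .inr y := by
  rcases c with ⟨p, hp⟩ | y'
  · exact (hp (by simpa [proj, ← hc] using y.2)).elim
  · exact congrArg Sum.inr (Subtype.ext hc)

/-- The points of `S` have singleton fibres under `proj`. -/
lemma map_inr_eq_map_mk {F : Type u ⥤ Type u} (h : Preserves14IsoPullbacks F) {C : Type u}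
    (g : C → S) {u : F.obj C} {t : F.obj P}
    (hut : F.map (TypeCat.ofHom (Subtype.val ∘ g)) u = F.map (TypeCat.ofHom q) t) :
    F.map (TypeCat.ofHom (Sum.inr ∘ g)) u = F.map (TypeCat.ofHom (mk q S)) t := by
  refine h.map_eq_of_fibre_eq_singleton _ proj (fun c d hd => eq_inr_of_proj_eq hd) ?_
  rw [map_ofHom_map_ofHom]
  exact (congrArg (fun f => F.map (TypeCat.ofHom f) t) (funext proj_mk)).trans hut.symm

end Collapse

namespace BarrUpperBound

variable {X Y Z W : Type u} (r₁ : Rel' X Y) (r₂ : Rel' Y Z) (r₃ : Rel' Z W)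

abbrev Y' : Type u := Collapse (fun p : RelSpan r₂ => p.1.1) {y | ∃ x, r₁ x y}

abbrev Z' : Type u := Collapse (fun p : RelSpan r₂ => p.1.2) {z | ∃ w, r₃ z w}

noncomputable abbrev mkY' : RelSpan r₂ → Y' r₁ r₂ := Collapse.mk _ _

noncomputable abbrev mkZ' : RelSpan r₂ → Z' r₂ r₃ := Collapse.mk _ _

def s₁ : Rel' X (Y' r₁ r₂) := fun x a => r₁ x a.proj

def s₂ : Rel' (Y' r₁ r₂) (Z' r₂ r₃) := fun a b => ∃ p, mkY' r₁ r₂ p = a ∧ mkZ' r₂ r₃ p = b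

def s₃ : Rel' (Z' r₂ r₃) W := fun b w => r₃ b.proj w

lemma comp_eq : relComp (s₃ r₂ r₃) (relComp (s₂ r₁ r₂ r₃) (s₁ r₁ r₂)) =
    relComp r₃ (relComp r₂ r₁) := by
  funext x w
  apply propext
  constructor
  · rintro ⟨_, ⟨_, hxy, p, rfl, rfl⟩, hzw⟩
    simp only [s₁, s₃, Collapse.proj_mk] at hxy hzw
    exact ⟨p.1.2, ⟨p.1.1, hxy, p.2⟩, hzw⟩
  · rintro ⟨z, ⟨y, hxy, hyz⟩, hzw⟩
    exact ⟨_, ⟨_, by simpa [s₁] using hxy, ⟨(y, z), hyz⟩, rfl, rfl⟩, by simpa [s₃] using hzw⟩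

lemma barrLift_comp_le {F : Type u ⥤ Type u} (h : Preserves14IsoPullbacks F) :
    relLe (relComp (BarrLift F r₃) (relComp (BarrLift F r₂) (BarrLift F r₁)))
      (relComp (BarrLift F (s₃ r₂ r₃)) (relComp (BarrLift F (s₂ r₁ r₂ r₃))
        (BarrLift F (s₁ r₁ r₂)))) := by
  rintro a d ⟨c, ⟨b, ⟨u₁, rfl, hu₁⟩, t, htb, htc⟩, u₃, hu₃, rfl⟩
  refine ⟨F.map (TypeCat.ofHom (mkZ' r₂ r₃)) t, ⟨F.map (TypeCat.ofHom (mkY' r₁ r₂)) t, ?_,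
    barrLift_map_map_s13 _ _ (fun p => ⟨p, rfl, rfl⟩) t⟩, ?_⟩
  · rw [← Collapse.map_inr_eq_map_mk h (S := {y | ∃ x, r₁ x y}) (fun p : RelSpan r₁ => ⟨p.1.2, p.1.1, p.2⟩)
      (hu₁.trans htb.symm)]
    exact barrLift_map_map_s13 _ _ (fun p => p.2) u₁
  · rw [← Collapse.map_inr_eq_map_mk h (S := {z | ∃ w, r₃ z w}) (fun p : RelSpan r₃ => ⟨p.1.1, p.1.2, p.2⟩)
      (hu₃.trans htc.symm)]
    exact barrLift_map_map_s13 _ _ (fun p => p.2) u₃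

lemma exists_s₃_of_s₂ {a a' : Y' r₁ r₂} {b : Z' r₂ r₃} (hne : a ≠ a')
    (ha : s₂ r₁ r₂ r₃ a b) (ha' : s₂ r₁ r₂ r₃ a' b) : ∃ w, s₃ r₂ r₃ b w := by
  obtain ⟨p, rfl, rfl⟩ := ha
  obtain ⟨p', rfl, hp⟩ := ha'
  obtain ⟨w, hw⟩ := Collapse.mem_of_mk_eq_mk hp.symm (ne_of_apply_ne _ hne)
  exact ⟨w, by simpa [s₃] using hw⟩

lemma exists_s₁_of_s₂ {a : Y' r₁ r₂} {b b' : Z' r₂ r₃} (hne : b ≠ b')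
    (hb : s₂ r₁ r₂ r₃ a b) (hb' : s₂ r₁ r₂ r₃ a b') : ∃ x, s₁ r₁ r₂ x a := by
  obtain ⟨p, rfl, rfl⟩ := hb
  obtain ⟨p', hp, rfl⟩ := hb'
  obtain ⟨x, hx⟩ := Collapse.mem_of_mk_eq_mk hp.symm (ne_of_apply_ne _ hne)
  exact ⟨x, by simpa [s₁] using hx⟩

end BarrUpperBound

/-- For a functor preserving 1/4-iso pullbacks, every composable triple of relations has a
Barr upper bound `s₁, s₂, s₃` satisfying the two splitting conditions. -/
theorem stmt13 (F : Type u ⥤ Type u) (h : Preserves14IsoPullbacks F)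
    (X Y Z W : Type u) (r₁ : Rel' X Y) (r₂ : Rel' Y Z) (r₃ : Rel' Z W) :
    ∃ (Y' Z' : Type u) (s₁ : Rel' X Y') (s₂ : Rel' Y' Z') (s₃ : Rel' Z' W),
      relComp s₃ (relComp s₂ s₁) = relComp r₃ (relComp r₂ r₁) ∧
      relLe (relComp (BarrLift F r₃) (relComp (BarrLift F r₂) (BarrLift F r₁)))
        (relComp (BarrLift F s₃) (relComp (BarrLift F s₂) (BarrLift F s₁))) ∧
      (∀ (y y' : Y') (z : Z'), y ≠ y' → s₂ y z → s₂ y' z → ∃ w, s₃ z w) ∧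
      (∀ (y : Y') (z z' : Z'), z ≠ z' → s₂ y z → s₂ y z' → ∃ x, s₁ x y) := by
  open BarrUpperBound in
  exact ⟨Y' r₁ r₂, Z' r₂ r₃, s₁ r₁ r₂, s₂ r₁ r₂ r₃, s₃ r₂ r₃, comp_eq r₁ r₂ r₃,
    barrLift_comp_le r₁ r₂ r₃ h, fun _ _ _ => exists_s₃_of_s₂ r₁ r₂ r₃,
    fun _ _ _ => exists_s₁_of_s₂ r₁ r₂ r₃⟩
end
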